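/- Let V be a finite type with n = Fintype.card V ≥ 2, let E : V → V → Prop, and let k ≥ 2, ℓ ≥ 1 with k^ℓ ≥ n − 1. Define f : ℕ → V → V → Prop by f 0 u v ↔ (u = v ∨ E u v), and f (i+1) u v ↔ ∃ (c : Fin (k+1) → V), c 0 = u ∧ c k = v ∧ ∀ j : Fin k, f i (c j.castSucc) (c j.succ). Then f ℓ s t holds if and only if there is a walk from s to t in (V, E). -/
import Mathlib

/-- There is a walk of length exactly `m` from `u` to `v` in the directed graph `E`. -/
def WalkLen {V : Type*} (E : V → V → Prop) (m : ℕ) (u v : V) : Prop :=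
  ∃ a : Fin (m + 1) → V,
    a 0 = u ∧ a (Fin.last m) = v ∧ ∀ i : Fin m, E (a i.castSucc) (a i.succ)

/-- ℕ-indexed walk predicate, easier to manipulate. -/
def NWalk {V : Type*} (E : V → V → Prop) (m : ℕ) (u v : V) : Prop :=
  ∃ a : ℕ → V, a 0 = u ∧ a m = v ∧ ∀ i < m, E (a i) (a (i + 1))

lemma walklen_iff_nwalk {V : Type*} (E : V → V → Prop) (m : ℕ) (u v : V) :
    WalkLen E m u v ↔ NWalk E m u v := by
  constructor
  · rintro ⟨a, h0, hl, he⟩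
    refine ⟨fun i => a ⟨min i m, by omega⟩, ?_, ?_, ?_⟩
    · rw [← h0]; exact congrArg a (Fin.ext (by simp))
    · rw [← hl]; exact congrArg a (Fin.ext (by simp [Fin.last]))
    · intro i hi
      have h := he ⟨i, hi⟩
      have e1 : (⟨i, hi⟩ : Fin m).castSucc = ⟨min i m, by omega⟩ := by
        apply Fin.ext; simp [Fin.castSucc]; omega
      have e2 : (⟨i, hi⟩ : Fin m).succ = ⟨min (i + 1) m, by omega⟩ := by
        apply Fin.ext; simp [Fin.succ]; omega
      rw [e1, e2] at h
      exact h
  · rintro ⟨a, h0, hl, he⟩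
    refine ⟨fun i => a i.val, h0, hl, fun i => he i.val i.isLt⟩

lemma nwalk_comp {V : Type*} {E : V → V → Prop} {m₁ m₂ : ℕ} {u w v : V}
    (h1 : NWalk E m₁ u w) (h2 : NWalk E m₂ w v) : NWalk E (m₁ + m₂) u v := by
  obtain ⟨a, ha0, ham, hae⟩ := h1
  obtain ⟨b, hb0, hbm, hbe⟩ := h2
  refine ⟨fun i => if i < m₁ then a i else b (i - m₁), ?_, ?_, ?_⟩
  · show (if 0 < m₁ then a 0 else b (0 - m₁)) = u
    by_cases h : 0 < m₁
    · rw [if_pos h, ha0]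
    · rw [if_neg h]
      have hm0 : m₁ = 0 := by omega
      rw [show (0 : ℕ) - m₁ = 0 by omega, hb0, ← ham, hm0, ha0]
  · show (if m₁ + m₂ < m₁ then a (m₁ + m₂) else b (m₁ + m₂ - m₁)) = v
    rw [if_neg (by omega), show m₁ + m₂ - m₁ = m₂ by omega, hbm]
  · intro i hi
    show E (if i < m₁ then a i else b (i - m₁))
         (if i + 1 < m₁ then a (i + 1) else b (i + 1 - m₁))
    by_cases h1' : i + 1 < m₁
    · rw [if_pos h1', if_pos (by omega)]
      exact hae i (by omega)
    · rw [if_neg h1']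
      by_cases h3 : i < m₁
      · have h4 : i + 1 = m₁ := by omega
        rw [if_pos h3, show i + 1 - m₁ = 0 by omega, hb0, ← ham, ← h4]
        exact hae i (by omega)
      · rw [if_neg h3, show i + 1 - m₁ = i - m₁ + 1 by omega]
        exact hbe (i - m₁) (by omega)

lemma nwalk_splice {V : Type*} {E : V → V → Prop} {u v : V} {m : ℕ}
    (a : ℕ → V) (ha0 : a 0 = u) (ham : a m = v)
    (hae : ∀ i < m, E (a i) (a (i + 1)))
    (p q : ℕ) (hpq : p < q) (hqm : q ≤ m) (heq : a p = a q) :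
    NWalk E (m - (q - p)) u v := by
  refine ⟨fun i => if i < p then a i else a (i + (q - p)), ?_, ?_, ?_⟩
  · show (if 0 < p then a 0 else a (0 + (q - p))) = u
    by_cases h : 0 < p
    · rw [if_pos h, ha0]
    · rw [if_neg h, show 0 + (q - p) = q by omega, ← heq,
        show p = 0 by omega, ha0]
  · show (if m - (q - p) < p then a (m - (q - p)) else a (m - (q - p) + (q - p))) = v
    rw [if_neg (by omega), show m - (q - p) + (q - p) = m by omega, ham]
  · intro i hi
    show E (if i < p then a i else a (i + (q - p)))
         (if i + 1 < p then a (i + 1) else a (i + 1 + (q - p)))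
    by_cases h1 : i + 1 < p
    · rw [if_pos h1, if_pos (by omega)]
      exact hae i (by omega)
    · rw [if_neg h1]
      by_cases h2 : i < p
      · rw [if_pos h2, show i + 1 + (q - p) = q by omega, ← heq,
          show p = i + 1 by omega]
        exact hae i (by omega)
      · rw [if_neg h2, show i + 1 + (q - p) = i + (q - p) + 1 by omega]
        exact hae (i + (q - p)) (by omega)

lemma nwalk_shorten {V : Type*} [Fintype V] {E : V → V → Prop} {u v : V} :
    ∀ m, NWalk E m u v → ∃ m' ≤ Fintype.card V - 1, NWalk E m' u v := by
  intro m
  induction m using Nat.strong_induction_on with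
  | _ m ih =>
    intro hw
    by_cases hm : m ≤ Fintype.card V - 1
    · exact ⟨m, hm, hw⟩
    · obtain ⟨a, ha0, ham, hae⟩ := hw
      have : Nonempty V := ⟨u⟩
      have hc1 : 1 ≤ Fintype.card V := Fintype.card_pos
      have hcard : Fintype.card V < Fintype.card (Fin (m + 1)) := by
        rw [Fintype.card_fin]; omega
      obtain ⟨i, j, hij, heq⟩ :=
        Fintype.exists_ne_map_eq_of_card_lt (fun i : Fin (m + 1) => a i.val) hcard
      have hne : i.val ≠ j.val := fun h => hij (Fin.ext h)
      rcases Nat.lt_or_ge i.val j.val with hlt | hge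
      · have hsp := nwalk_splice a ha0 ham hae i.val j.val hlt (by omega) heq
        exact ih (m - (j.val - i.val)) (by omega) hsp
      · have hlt : j.val < i.val := by omega
        have hsp := nwalk_splice a ha0 ham hae j.val i.val hlt (by omega) heq.symm
        exact ih (m - (i.val - j.val)) (by omega) hsp

lemma nwalk_sub {V : Type*} {E : V → V → Prop} {m : ℕ}
    (a : ℕ → V) (hae : ∀ i < m, E (a i) (a (i + 1)))
    (p q : ℕ) (hpq : p ≤ q) (hqm : q ≤ m) :
    NWalk E (q - p) (a p) (a q) := by
  refine ⟨fun i => a (p + i), by simp, ?_, ?_⟩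
  · show a (p + (q - p)) = a q
    rw [show p + (q - p) = q by omega]
  · intro i hi
    show E (a (p + i)) (a (p + (i + 1)))
    rw [show p + (i + 1) = p + i + 1 by omega]
    exact hae (p + i) (by omega)

section main
variable {V : Type*} (E : V → V → Prop) (k : ℕ)
  (f : ℕ → V → V → Prop)
  (h0 : ∀ u v, f 0 u v ↔ (u = v ∨ E u v))
  (hs : ∀ (i : ℕ) (u v : V),
    f (i + 1) u v ↔
      ∃ c : Fin (k + 1) → V, c 0 = u ∧ c (Fin.last k) = v ∧
        ∀ j : Fin k, f i (c j.castSucc) (c j.succ))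

include h0 hs in
lemma f_fwd : ∀ i (u v : V), f i u v → ∃ m, NWalk E m u v := by
  intro i
  induction i with
  | zero =>
    intro u v h
    rcases (h0 u v).mp h with rfl | he
    · exact ⟨0, fun _ => u, rfl, rfl, by omega⟩
    · refine ⟨1, fun t => if t = 0 then u else v, by simp, by simp, ?_⟩
      intro i hi
      have h1 : i = 0 := by omega
      simp [h1, he]
  | succ i ih =>
    intro u v h
    obtain ⟨c, hc0, hcl, hce⟩ := (hs i u v).mp h
    have key : ∀ j (hj : j ≤ k), ∃ m, NWalk E m u (c ⟨j, by omega⟩) := by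
      intro j
      induction j with
      | zero =>
        intro _
        refine ⟨0, fun _ => u, rfl, ?_, by omega⟩
        have he0 : (⟨0, by omega⟩ : Fin (k + 1)) = 0 := rfl
        rw [he0, hc0]
      | succ j ihj =>
        intro hj
        obtain ⟨m₁, hw₁⟩ := ihj (by omega)
        have hjk : j < k := by omega
        have hstep := hce ⟨j, hjk⟩
        have hcast : (⟨j, hjk⟩ : Fin k).castSucc = ⟨j, by omega⟩ := rfl
        have hsucc : (⟨j, hjk⟩ : Fin k).succ = ⟨j + 1, by omega⟩ := rfl
        rw [hcast, hsucc] at hstep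
        obtain ⟨m₂, hw₂⟩ := ih _ _ hstep
        exact ⟨m₁ + m₂, nwalk_comp hw₁ hw₂⟩
    obtain ⟨m, hw⟩ := key k le_rfl
    have hlast : (⟨k, by omega⟩ : Fin (k + 1)) = Fin.last k := rfl
    rw [hlast, hcl] at hw
    exact ⟨m, hw⟩

include h0 hs in
lemma f_bwd : ∀ i (u v : V) m, m ≤ k ^ i → NWalk E m u v → f i u v := by
  intro i
  induction i with
  | zero =>
    intro u v m hm hw
    obtain ⟨a, ha0, ham, hae⟩ := hw
    rw [h0]
    have hm1 : m ≤ 1 := by simpa using hm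
    interval_cases m
    · left; rw [← ha0, ← ham]
    · right
      have he := hae 0 (by omega)
      rwa [ha0, ham] at he
  | succ i ih =>
    intro u v m hm hw
    obtain ⟨a, ha0, ham, hae⟩ := hw
    rw [hs]
    refine ⟨fun j => a (min (j.val * k ^ i) m), ?_, ?_, ?_⟩
    · simp [ha0]
    · have hkk : m ≤ k * k ^ i := by
        calc m ≤ k ^ (i + 1) := hm
        _ = k * k ^ i := by ring
      simp only [Fin.val_last]
      rw [min_eq_right hkk, ham]
    · intro j
      set p := min (j.val * k ^ i) m with hp
      set q := min ((j.val + 1) * k ^ i) m with hq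
      have hcast : (j.castSucc.val : ℕ) = j.val := rfl
      have hsucc : (j.succ.val : ℕ) = j.val + 1 := rfl
      have hmul : (j.val + 1) * k ^ i = j.val * k ^ i + k ^ i := by ring
      have hple : p ≤ q := by omega
      have hqle : q ≤ m := by omega
      have hdiff : q - p ≤ k ^ i := by omega
      have hwalk := nwalk_sub a hae p q hple hqle
      show f i (a (min (j.castSucc.val * k ^ i) m)) (a (min (j.succ.val * k ^ i) m))
      rw [hcast, hsucc]
      exact ih (a p) (a q) (q - p) hdiff hwalk

end main

theorem stmt_13 {V : Type*} [Fintype V] (E : V → V → Prop) (s t : V)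
    (k ℓ : ℕ) (hn : 2 ≤ Fintype.card V) (hk : 2 ≤ k) (hℓ : 1 ≤ ℓ)
    (hkl : Fintype.card V - 1 ≤ k ^ ℓ)
    (f : ℕ → V → V → Prop)
    (h0 : ∀ u v, f 0 u v ↔ (u = v ∨ E u v))
    (hs : ∀ (i : ℕ) (u v : V),
      f (i + 1) u v ↔
        ∃ c : Fin (k + 1) → V, c 0 = u ∧ c (Fin.last k) = v ∧
          ∀ j : Fin k, f i (c j.castSucc) (c j.succ)) :
    f ℓ s t ↔ ∃ m, WalkLen E m s t := by
  constructor
  · intro h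
    obtain ⟨m, hw⟩ := f_fwd E k f h0 hs ℓ s t h
    exact ⟨m, (walklen_iff_nwalk E m s t).mpr hw⟩
  · rintro ⟨m, hw⟩
    have hnw := (walklen_iff_nwalk E m s t).mp hw
    obtain ⟨m', hm', hw'⟩ := nwalk_shorten m hnw
    exact f_bwd E k f h0 hs ℓ s t m' (le_trans hm' hkl) hw'
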